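/- Under the local separable condition with p_0 = 1 and in the limit L → ∞ (so that p_k(y|x)/p_{k*(x)}(y|x) → 0 for all k ≠ k*(x), P_t-almost surely), the stacking weights maximizing ∫∫ log(∑_k w_k p_k(y|x)) dP_t(y|x) dμ(x) over the simplex converge to w_k = μ({x : k*(x) = k}), i.e., the probability (over the covariate distribution) that model k is the locally best model. -/

import Mathlib

/-!
Write `v k` for the `μ`-mass of `{kstar = k}` and `ε = exp (-L)`. On the separable event every
competing density is at most `ε` times the locally best one, so the `w`-mixture is at most
`(w k⋆ + ε) p_{k⋆}` while the `v`-mixture is at least `v k⋆ p_{k⋆}`. Integrating over the fibres of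
`kstar` and using the optimality of `w` gives `0 ≤ ∑ v k log ((w k + ε) / v k)`. Since
`v log (u / v) ≤ u - v - (√u - √v)²`, the squared Hellinger distance `∑ (√(w k + ε) - √(v k))²`
is then at most `K ε`, which tends to `0`.
-/

open MeasureTheory Finset Filter Topology Real

theorem mul_log_sub_log_le_sub_sub_sq_sqrt {u v : ℝ} (hu : 0 < u) (hv : 0 < v) :
    v * (log u - log v) ≤ u - v - (√u - √v) ^ 2 := by
  have hsu := sqrt_pos.2 hu
  have hsv := sqrt_pos.2 hv
  have hlog := log_le_sub_one_of_pos (div_pos hsu hsv)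
  rw [log_div hsu.ne' hsv.ne', log_sqrt hu.le, log_sqrt hv.le] at hlog
  calc v * (log u - log v) ≤ √v ^ 2 * (2 * (√u / √v - 1)) := by
        rw [sq_sqrt hv.le]; gcongr; linarith
    _ = √u ^ 2 - √v ^ 2 - (√u - √v) ^ 2 := by field_simp; ring
    _ = u - v - (√u - √v) ^ 2 := by rw [sq_sqrt hu.le, sq_sqrt hv.le]

theorem sum_sq_sqrt_sub_sqrt_le_of_sum_mul_log_nonneg {ι : Type*} [Fintype ι] {u v : ι → ℝ}
    (hu : ∀ i, 0 < u i) (hv : ∀ i, 0 < v i) (h : 0 ≤ ∑ i, v i * (log (u i) - log (v i))) :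
    ∑ i, (√(u i) - √(v i)) ^ 2 ≤ ∑ i, u i - ∑ i, v i := by
  have := h.trans (sum_le_sum fun i _ => mul_log_sub_log_le_sub_sub_sq_sqrt (hu i) (hv i))
  rw [sum_sub_distrib, sum_sub_distrib] at this
  linarith

theorem tendsto_of_sq_sqrt_sub_sqrt_le {α : Type*} {l : Filter α} {a c : α → ℝ} {b : ℝ}
    (ha : ∀ x, 0 ≤ a x) (hb : 0 ≤ b) (hc : Tendsto c l (𝓝 0))
    (h : ∀ x, (√(a x) - √b) ^ 2 ≤ c x) : Tendsto a l (𝓝 b) := by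
  have hsqrt : Tendsto (fun x => √(a x)) l (𝓝 √b) := by
    rw [tendsto_iff_norm_sub_tendsto_zero]
    refine squeeze_zero (fun _ => norm_nonneg _) (fun x => abs_le_sqrt (h x)) ?_
    simpa using hc.sqrt
  simpa [sq_sqrt, ha, hb] using hsqrt.pow 2

theorem le_exp_neg_mul_of_log_add_le {a b L : ℝ} (ha : 0 < a) (hb : 0 < b)
    (h : log a + L ≤ log b) : a ≤ exp (-L) * b := by
  rw [← exp_log ha, ← exp_log hb, ← exp_add]
  exact exp_le_exp.2 (by linarith)

theorem sum_mul_le_add_mul_of_le_mul {ι : Type*} [Fintype ι] [DecidableEq ι] {w q : ι → ℝ}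
    {k : ι} {ε : ℝ} (hw : ∀ i, 0 ≤ w i) (hsum : ∑ i, w i ≤ 1) (hε : 0 ≤ ε) (hqk : 0 ≤ q k)
    (hq : ∀ i ≠ k, q i ≤ ε * q k) : ∑ i, w i * q i ≤ (w k + ε) * q k := by
  have hrest : ∑ i ∈ univ.erase k, w i ≤ 1 :=
    (sum_le_sum_of_subset_of_nonneg (subset_univ _) fun i _ _ => hw i).trans hsum
  rw [← add_sum_erase _ _ (mem_univ k), add_mul]
  gcongr
  calc ∑ i ∈ univ.erase k, w i * q i ≤ ∑ i ∈ univ.erase k, w i * (ε * q k) :=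
        sum_le_sum fun i hi => mul_le_mul_of_nonneg_left (hq i (ne_of_mem_erase hi)) (hw i)
    _ = (∑ i ∈ univ.erase k, w i) * (ε * q k) := (sum_mul ..).symm
    _ ≤ ε * q k := mul_le_of_le_one_left (mul_nonneg hε hqk) hrest

theorem log_sum_mul_sub_log_sum_mul_le {ι : Type*} [Fintype ι] {w v q : ι → ℝ} {k : ι} {ε : ℝ}
    (hw : ∀ i, 0 ≤ w i) (hsum : ∑ i, w i = 1) (hv : ∀ i, 0 ≤ v i) (hvk : 0 < v k)
    (hε : 0 < ε) (hq : ∀ i, 0 < q i) (hsep : ∀ i ≠ k, q i ≤ ε * q k) :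
    log (∑ i, w i * q i) - log (∑ i, v i * q i) ≤ log (w k + ε) - log (v k) := by
  classical
  obtain ⟨j, -, hj⟩ := exists_lt_of_sum_lt (s := univ) (f := 0) (g := w) (by simp [hsum])
  have hmix_pos : 0 < ∑ i, w i * q i :=
    sum_pos' (fun i _ => mul_nonneg (hw i) (hq i).le) ⟨j, mem_univ j, mul_pos hj (hq j)⟩
  have hupper := sum_mul_le_add_mul_of_le_mul hw hsum.le hε.le (hq k).le hsep
  have hlower : v k * q k ≤ ∑ i, v i * q i :=
    single_le_sum (fun i _ => mul_nonneg (hv i) (hq i).le) (mem_univ k)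
  have hwk : 0 < w k + ε := add_pos_of_nonneg_of_pos (hw k) hε
  calc log (∑ i, w i * q i) - log (∑ i, v i * q i)
      ≤ log ((w k + ε) * q k) - log (v k * q k) :=
        sub_le_sub (log_le_log hmix_pos hupper) (log_le_log (mul_pos hvk (hq k)) hlower)
    _ = log (w k + ε) - log (v k) := by
        rw [log_mul hwk.ne' (hq k).ne', log_mul hvk.ne' (hq k).ne']; ring

theorem integral_comp_eq_sum_measureReal {X ι : Type*} [MeasurableSpace X] {μ : Measure X}
    [IsFiniteMeasure μ] [Fintype ι] [MeasurableSpace ι] [MeasurableSingletonClass ι]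
    {g : X → ι} (hg : Measurable g) (f : ι → ℝ) :
    ∫ x, f (g x) ∂μ = ∑ i, μ.real {x | g x = i} * f i := by
  rw [← integral_map hg.aemeasurable (by fun_prop), integral_fintype .of_finite]
  simp [map_measureReal_apply hg (measurableSet_singleton _)]
  rfl

section Stacking

variable {X Y ι : Type*} [MeasurableSpace X] [MeasurableSpace Y] [Fintype ι]

noncomputable def stackingObjective (μ : Measure X) (Pt : X → Measure Y) (q : ι → X → Y → ℝ)
    (w : ι → ℝ) : ℝ :=
  ∫ x, ∫ y, log (∑ k, w k * q k x y) ∂(Pt x) ∂μ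

def StackingIntegrable (μ : Measure X) (Pt : X → Measure Y) (q : ι → X → Y → ℝ)
    (w : ι → ℝ) : Prop :=
  (∀ x, Integrable (fun y => log (∑ k, w k * q k x y)) (Pt x)) ∧
    Integrable (fun x => ∫ y, log (∑ k, w k * q k x y) ∂(Pt x)) μ

theorem integral_log_sum_mul_sub_le {P : Measure Y} [IsProbabilityMeasure P] {w v : ι → ℝ}
    {q : ι → Y → ℝ} {k : ι} {ε : ℝ} (hw : ∀ i, 0 ≤ w i) (hsum : ∑ i, w i = 1)
    (hv : ∀ i, 0 ≤ v i) (hvk : 0 < v k) (hε : 0 < ε) (hq : ∀ i y, 0 < q i y)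
    (hsep : ∀ᵐ y ∂P, ∀ i ≠ k, q i y ≤ ε * q k y)
    (hIw : Integrable (fun y => log (∑ i, w i * q i y)) P)
    (hIv : Integrable (fun y => log (∑ i, v i * q i y)) P) :
    ∫ y, log (∑ i, w i * q i y) ∂P - ∫ y, log (∑ i, v i * q i y) ∂P ≤
      log (w k + ε) - log (v k) := by
  rw [← integral_sub hIw hIv]
  calc _ ≤ ∫ _, (log (w k + ε) - log (v k)) ∂P :=
        integral_mono_ae (hIw.sub hIv) (integrable_const _) <| hsep.mono fun y hy =>
          log_sum_mul_sub_log_sum_mul_le hw hsum hv hvk hε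
            (fun i => hq i y) hy
    _ = _ := by simp

theorem stackingObjective_sub_le [MeasurableSpace ι] [MeasurableSingletonClass ι]
    {μ : Measure X} [IsFiniteMeasure μ] {Pt : X → Measure Y}
    (hPt : ∀ x, IsProbabilityMeasure (Pt x)) {q : ι → X → Y → ℝ} (hq : ∀ k x y, 0 < q k x y)
    {g : X → ι} (hg : Measurable g) {ε : ℝ} (hε : 0 < ε)
    (hsep : ∀ᵐ x ∂μ, ∀ᵐ y ∂(Pt x), ∀ k ≠ g x, q k x y ≤ ε * q (g x) x y)
    {w v : ι → ℝ} (hw : ∀ k, 0 ≤ w k) (hsum : ∑ k, w k = 1) (hv : ∀ k, 0 < v k)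
    (hIw : StackingIntegrable μ Pt q w) (hIv : StackingIntegrable μ Pt q v) :
    stackingObjective μ Pt q w - stackingObjective μ Pt q v ≤
      ∑ k, μ.real {x | g x = k} * (log (w k + ε) - log (v k)) := by
  rw [stackingObjective, stackingObjective, ← integral_sub hIw.2 hIv.2,
    ← integral_comp_eq_sum_measureReal hg]
  exact integral_mono_ae (hIw.2.sub hIv.2)
    ((Integrable.of_finite (f := fun k => log (w k + ε) - log (v k))).comp_measurable hg) <|
    hsep.mono fun x hx => integral_log_sum_mul_sub_le hw hsum (fun k => (hv k).le) (hv (g x)) hε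
      (hq · x) hx (hIw.1 x) (hIv.1 x)

end Stacking

theorem stacking_weights_local_best_probability_general
    {X Y : Type*} [MeasurableSpace X] [MeasurableSpace Y]
    (μ : Measure X) [IsProbabilityMeasure μ]
    (Pt : X → Measure Y) (hPt : ∀ x, IsProbabilityMeasure (Pt x))
    (K : ℕ)
    (p : ℝ → Fin K → X → Y → ℝ) (hp : ∀ L k x y, 0 < p L k x y)
    (kstar : X → Fin K) (hkstar : Measurable kstar)
    (hposk : ∀ k : Fin K, 0 < μ {x | kstar x = k})
    -- local separable condition with probability `p₀ = 1` and margin `L`: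
    (hsep : ∀ L, ∀ᵐ x ∂μ, ∀ᵐ y ∂(Pt x), ∀ k, k ≠ kstar x →
      Real.log (p L k x y) + L ≤ Real.log (p L (kstar x) x y))
    -- integrability so that all objectives are well defined:
    (hInt : ∀ L, ∀ w : Fin K → ℝ, (∀ k, 0 ≤ w k) → ∑ k, w k = 1 →
      (∀ x, Integrable (fun y => Real.log (∑ k, w k * p L k x y)) (Pt x)) ∧
      Integrable (fun x => ∫ y, Real.log (∑ k, w k * p L k x y) ∂(Pt x)) μ)
    (w : ℝ → Fin K → ℝ)
    (hwsimplex : ∀ L, (∀ k, 0 ≤ w L k) ∧ ∑ k, w L k = 1)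
    (hwmax : ∀ L, ∀ v : Fin K → ℝ, (∀ k, 0 ≤ v k) → ∑ k, v k = 1 →
      ∫ x, ∫ y, Real.log (∑ k, v k * p L k x y) ∂(Pt x) ∂μ ≤
        ∫ x, ∫ y, Real.log (∑ k, w L k * p L k x y) ∂(Pt x) ∂μ) :
    Tendsto w atTop (nhds (fun k => (μ {x | kstar x = k}).toReal)) := by
  set v : Fin K → ℝ := fun k => μ.real {x | kstar x = k}
  have hv : ∀ k, 0 < v k := fun k => ENNReal.toReal_pos (hposk k).ne' (measure_ne_top μ _)
  have hvsum : ∑ k, v k = 1 := by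
    simpa using (integral_comp_eq_sum_measureReal (μ := μ) hkstar fun _ => (1 : ℝ)).symm
  have hgap : ∀ L, ∑ k, (√(w L k + exp (-L)) - √(v k)) ^ 2 ≤ K * exp (-L) := by
    intro L
    obtain ⟨hw, hwsum⟩ := hwsimplex L
    have hsepL : ∀ᵐ x ∂μ, ∀ᵐ y ∂(Pt x), ∀ k ≠ kstar x,
        p L k x y ≤ exp (-L) * p L (kstar x) x y :=
      (hsep L).mono fun x hx => hx.mono fun y hy k hk =>
        le_exp_neg_mul_of_log_add_le (hp L k x y) (hp L _ x y) (hy k hk)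
    have hbound := stackingObjective_sub_le hPt (hp L) hkstar (exp_pos (-L)) hsepL hw hwsum hv
      (hInt L _ hw hwsum) (hInt L v (fun k => (hv k).le) hvsum)
    have hopt : stackingObjective μ Pt (p L) v ≤ stackingObjective μ Pt (p L) (w L) :=
      hwmax L v (fun k => (hv k).le) hvsum
    refine (sum_sq_sqrt_sub_sqrt_le_of_sum_mul_log_nonneg
      (fun k => add_pos_of_nonneg_of_pos (hw k) (exp_pos _)) hv (by linarith)).trans_eq ?_
    simp [sum_add_distrib, hwsum, hvsum]
  rw [tendsto_pi_nhds]
  intro k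
  have hε : Tendsto (fun L : ℝ => exp (-L)) atTop (𝓝 0) := tendsto_exp_neg_atTop_nhds_zero
  have hshift := tendsto_of_sq_sqrt_sub_sqrt_le (a := fun L => w L k + exp (-L))
    (fun L => add_nonneg ((hwsimplex L).1 k) (exp_pos _).le) (hv k).le
    (by simpa using hε.const_mul (K : ℝ))
    fun L => (single_le_sum (f := fun j => (√(w L j + exp (-L)) - √(v j)) ^ 2)
      (fun j _ => sq_nonneg _) (mem_univ k)).trans (hgap L)
  simpa [v, measureReal_def] using hshift.sub hε

/-- Theorem 2: under the local separable condition with `p₀ = 1`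
along a family of predictive densities indexed by the margin `L → ∞`, any
maximizers of the stacking objective converge to the probabilities (over the
covariate distribution) that each model is the locally best model. -/
theorem stacking_weights_local_best_probability
    {X Y : Type*} [MeasurableSpace X] [MeasurableSpace Y]
    (μ : Measure X) [IsProbabilityMeasure μ]
    (Pt : X → Measure Y) (hPt : ∀ x, IsProbabilityMeasure (Pt x))
    (K : ℕ) (hK : 1 ≤ K)
    (p : ℝ → Fin K → X → Y → ℝ) (hp : ∀ L k x y, 0 < p L k x y)
    (kstar : X → Fin K) (hkstar : Measurable kstar)
    (hposk : ∀ k : Fin K, 0 < μ {x | kstar x = k})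
    -- local best model: `kstar x` maximizes the local expected log density, uniquely μ-a.e.
    (hlocal : ∀ L, ∀ᵐ x ∂μ, ∀ k, k ≠ kstar x →
      ∫ y, Real.log (p L k x y) ∂(Pt x) < ∫ y, Real.log (p L (kstar x) x y) ∂(Pt x))
    -- local separable condition with probability `p₀ = 1` and margin `L`:
    (hsep : ∀ L, ∀ᵐ x ∂μ, ∀ᵐ y ∂(Pt x), ∀ k, k ≠ kstar x →
      Real.log (p L k x y) + L ≤ Real.log (p L (kstar x) x y))
    -- integrability so that all objectives are well defined:
    (hInt : ∀ L, ∀ w : Fin K → ℝ, (∀ k, 0 ≤ w k) → ∑ k, w k = 1 →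
      (∀ x, Integrable (fun y => Real.log (∑ k, w k * p L k x y)) (Pt x)) ∧
      Integrable (fun x => ∫ y, Real.log (∑ k, w k * p L k x y) ∂(Pt x)) μ)
    (w : ℝ → Fin K → ℝ)
    (hwsimplex : ∀ L, (∀ k, 0 ≤ w L k) ∧ ∑ k, w L k = 1)
    (hwmax : ∀ L, ∀ v : Fin K → ℝ, (∀ k, 0 ≤ v k) → ∑ k, v k = 1 →
      ∫ x, ∫ y, Real.log (∑ k, v k * p L k x y) ∂(Pt x) ∂μ ≤
        ∫ x, ∫ y, Real.log (∑ k, w L k * p L k x y) ∂(Pt x) ∂μ) :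
    Tendsto w atTop (nhds (fun k => (μ {x | kstar x = k}).toReal)) :=
  stacking_weights_local_best_probability_general μ Pt hPt K p hp kstar hkstar hposk hsep hInt w
    hwsimplex hwmax
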